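/- arXiv:2510.24909 — 2 statements merged into one kernel-verified Lean document; each statement's English description precedes it below -/
import Mathlib

section
/- Trust convergence under sustained cooperation with decaying reputation: let λ₊ ∈ (0,1), δ_R ∈ (0,1), a constant signal s ∈ (0,1), and initial states T⁰ ∈ [0,1], R⁰ ∈ [0,1]. Define the coupled dynamics Rᵗ⁺¹ = (1−δ_R)·Rᵗ and Tᵗ⁺¹ = Tᵗ + λ₊·s·(1−Tᵗ)·(1−Rᵗ). Then Tᵗ is nondecreasing and Tᵗ → 1 as t → ∞. -/
/-!
The reputation decays geometrically inside `[0, 1]`, so after the first step it is at most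
`1 - δ_R`. The distrust gap `1 - Tᵗ` is multiplied at each step by `1 - λ₊ s (1 - Rᵗ) ∈ [0, 1]`,
hence stays nonnegative (so `T` increases), and from the first step on the factor is at most
`1 - λ₊ s δ_R < 1`, so the gap vanishes geometrically.
-/

open Filter Topology Set

theorem tendsto_zero_of_nonneg_of_succ_le_mul {u : ℕ → ℝ} {q : ℝ} (hq0 : 0 ≤ q) (hq1 : q < 1)
    (hu : ∀ n, 0 ≤ u n) (hsucc : ∀ n, u (n + 1) ≤ q * u n) : Tendsto u atTop (𝓝 0) := by
  refine squeeze_zero hu (fun n ↦ le_geom hq0 n fun k _ ↦ hsucc k) ?_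
  simpa using (tendsto_pow_atTop_nhds_zero_of_lt_one hq0 hq1).mul_const (u 0)

section Reputation

variable {δ : ℝ} {R : ℕ → ℝ} (hR : ∀ t, R (t + 1) = (1 - δ) * R t)
include hR

theorem reputation_mem_Icc (hδ0 : 0 ≤ δ) (hδ1 : δ ≤ 1) (h0 : R 0 ∈ Icc 0 1) (t : ℕ) :
    R t ∈ Icc 0 1 := by
  induction t with
  | zero => exact h0
  | succ t ih =>
    rw [hR]
    exact unitInterval.mul_mem ⟨by linarith, by linarith⟩ ih

theorem reputation_succ_le (hδ1 : δ ≤ 1) {t : ℕ} (ht : R t ≤ 1) : R (t + 1) ≤ 1 - δ := by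
  rw [hR]
  exact mul_le_of_le_one_right (by linarith) ht

end Reputation

section Trust

variable {c : ℝ} {T R : ℕ → ℝ} (hT : ∀ t, T (t + 1) = T t + c * (1 - T t) * (1 - R t))
include hT

theorem one_sub_trust_succ (t : ℕ) : 1 - T (t + 1) = (1 - c * (1 - R t)) * (1 - T t) := by
  rw [hT]
  ring

theorem trust_le_one (hc : c ∈ Icc 0 1) (hR : ∀ t, R t ∈ Icc 0 1) (h0 : T 0 ≤ 1) (t : ℕ) :
    T t ≤ 1 := by
  induction t with
  | zero => exact h0
  | succ t ih =>
    have hfactor : 1 - c * (1 - R t) ∈ Icc 0 1 :=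
      Icc.mem_iff_one_sub_mem.mp (unitInterval.mul_mem hc (Icc.mem_iff_one_sub_mem.mp (hR t)))
    have hgap : 0 ≤ 1 - T (t + 1) := by
      rw [one_sub_trust_succ hT]
      exact mul_nonneg hfactor.1 (sub_nonneg.mpr ih)
    linarith

theorem trust_monotone (hc0 : 0 ≤ c) (hR : ∀ t, R t ≤ 1) (hT1 : ∀ t, T t ≤ 1) : Monotone T := by
  refine monotone_nat_of_le_succ fun t ↦ ?_
  rw [hT]
  have := mul_nonneg (mul_nonneg hc0 (sub_nonneg.mpr (hT1 t))) (sub_nonneg.mpr (hR t))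
  linarith

theorem trust_tendsto_one {δ : ℝ} (hc0 : 0 ≤ c) (hcδ : c * δ ≤ 1) (hcδ0 : 0 < c * δ)
    (hR : ∀ t, R (t + 1) ≤ 1 - δ) (hT1 : ∀ t, T t ≤ 1) : Tendsto T atTop (𝓝 1) := by
  have hcontract : ∀ t, 1 - T (t + 2) ≤ (1 - c * δ) * (1 - T (t + 1)) := fun t ↦ by
    rw [one_sub_trust_succ hT]
    have : c * δ ≤ c * (1 - R (t + 1)) := mul_le_mul_of_nonneg_left (by linarith [hR t]) hc0
    exact mul_le_mul_of_nonneg_right (by linarith) (sub_nonneg.mpr (hT1 _))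
  have hgap : Tendsto (fun t ↦ 1 - T (t + 1)) atTop (𝓝 0) :=
    tendsto_zero_of_nonneg_of_succ_le_mul (by linarith) (by linarith)
      (fun t ↦ sub_nonneg.mpr (hT1 _)) hcontract
  rw [← tendsto_add_atTop_iff_nat 1]
  simpa using (tendsto_const_nhds (x := (1 : ℝ))).sub hgap

end Trust

theorem trust_convergence_coupled_general
    (lamP deltaR s : ℝ)
    (hlP0 : 0 < lamP) (hlP1 : lamP < 1)
    (hd0 : 0 < deltaR) (hd1 : deltaR < 1)
    (hs0 : 0 < s) (hs1 : s < 1)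
    (T R : ℕ → ℝ)
    (hT01 : T 0 ≤ 1)
    (hR00 : 0 ≤ R 0) (hR01 : R 0 ≤ 1)
    (hRupd : ∀ t : ℕ, R (t + 1) = (1 - deltaR) * R t)
    (hTupd : ∀ t : ℕ, T (t + 1) = T t + lamP * s * (1 - T t) * (1 - R t)) :
    Monotone T ∧ Filter.Tendsto T Filter.atTop (nhds 1) := by
  have hc : lamP * s ∈ Icc 0 1 := unitInterval.mul_mem ⟨hlP0.le, hlP1.le⟩ ⟨hs0.le, hs1.le⟩
  have hR : ∀ t, R t ∈ Icc 0 1 := reputation_mem_Icc hRupd hd0.le hd1.le ⟨hR00, hR01⟩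
  have hT1 : ∀ t, T t ≤ 1 := trust_le_one hTupd hc hR hT01
  refine ⟨trust_monotone hTupd hc.1 (fun t ↦ (hR t).2) hT1, ?_⟩
  refine trust_tendsto_one hTupd hc.1 ?_ (by positivity)
    (fun t ↦ reputation_succ_le hRupd hd1.le (hR t).2) hT1
  exact mul_le_one₀ hc.2 hd0.le hd1.le

/-- Trust convergence under sustained cooperation with decaying
reputation: with coupled dynamics `R(t+1) = (1−δ_R)·R t` and
`T(t+1) = T t + λ₊·s·(1−T t)·(1−R t)`, the trust sequence is nondecreasing and
converges to 1. -/
theorem trust_convergence_coupled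
    (lamP deltaR s : ℝ)
    (hlP0 : 0 < lamP) (hlP1 : lamP < 1)
    (hd0 : 0 < deltaR) (hd1 : deltaR < 1)
    (hs0 : 0 < s) (hs1 : s < 1)
    (T R : ℕ → ℝ)
    (hT00 : 0 ≤ T 0) (hT01 : T 0 ≤ 1)
    (hR00 : 0 ≤ R 0) (hR01 : R 0 ≤ 1)
    (hRupd : ∀ t : ℕ, R (t + 1) = (1 - deltaR) * R t)
    (hTupd : ∀ t : ℕ, T (t + 1) = T t + lamP * s * (1 - T t) * (1 - R t)) :
    Monotone T ∧ Filter.Tendsto T Filter.atTop (nhds 1) :=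
  trust_convergence_coupled_general lamP deltaR s hlP0 hlP1 hd0 hd1 hs0 hs1 T R hT01 hR00 hR01 hRupd
    hTupd
end

section
/- Hysteresis (damaged relationships recover strictly slower): let λ₊ ∈ (0,1), δ_R ∈ (0,1), a constant cooperation signal s ∈ (0,1), and a common initial trust T⁰ ∈ [0,1). Consider a pristine trajectory with Rₚᵗ = 0 for all t and Tₚᵗ⁺¹ = Tₚᵗ + λ₊·s·(1−Tₚᵗ), and a damaged trajectory with R_dᵗ = (1−δ_R)ᵗ·R✶ for some R✶ ∈ (0,1] and T_dᵗ⁺¹ = T_dᵗ + λ₊·s·(1−T_dᵗ)·(1−R_dᵗ), both starting at T⁰. Then T_dᵗ < Tₚᵗ for every t ≥ 1. -/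
/-!
Write `a = λ₊ s`. The pristine distrust `1 - Tₚ` contracts by the factor `1 - a` each period,
while the damaged one contracts only by `1 - a (1 - R)`, a strictly weaker contraction as long
as the reputation `R` is positive. Comparing the two updates step by step: if `T_d ≤ Tₚ < 1`, then
`Tₚ' - T_d' = (1 - a)(Tₚ - T_d) + a R (1 - T_d) > 0`.
-/

theorem add_mul_one_sub_mul_lt_add_mul_one_sub {a r x y : ℝ} (ha0 : 0 < a) (ha1 : a ≤ 1)
    (hr : 0 < r) (hxy : x ≤ y) (hy : y < 1) :
    x + a * (1 - x) * (1 - r) < y + a * (1 - y) := by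
  have hgap : 0 < a * r * (1 - x) := mul_pos (mul_pos ha0 hr) (by linarith)
  nlinarith [mul_nonneg (sub_nonneg.2 ha1) (sub_nonneg.2 hxy)]

section TrustDynamics

variable {a : ℝ} {R Tp Td : ℕ → ℝ}

theorem one_sub_eq_pow_mul_of_trust_update (hTp : ∀ t, Tp (t + 1) = Tp t + a * (1 - Tp t))
    (t : ℕ) : 1 - Tp t = (1 - a) ^ t * (1 - Tp 0) := by
  induction t with
  | zero => simp
  | succ t ih => rw [hTp, pow_succ, mul_right_comm, ← ih]; ring

theorem damaged_trust_lt_pristine_trust_succ (ha0 : 0 < a) (ha1 : a < 1) (hR : ∀ t, 0 < R t)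
    (h0 : Td 0 ≤ Tp 0) (hTp0 : Tp 0 < 1)
    (hTp : ∀ t, Tp (t + 1) = Tp t + a * (1 - Tp t))
    (hTd : ∀ t, Td (t + 1) = Td t + a * (1 - Td t) * (1 - R t)) (t : ℕ) :
    Td (t + 1) < Tp (t + 1) := by
  have hTp_lt_one (t : ℕ) : Tp t < 1 := by
    have := one_sub_eq_pow_mul_of_trust_update hTp t
    have : 0 < (1 - a) ^ t * (1 - Tp 0) := by apply mul_pos <;> [positivity; linarith]
    linarith
  have hstep (t : ℕ) (hle : Td t ≤ Tp t) : Td (t + 1) < Tp (t + 1) := by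
    rw [hTp, hTd]
    exact add_mul_one_sub_mul_lt_add_mul_one_sub ha0 ha1.le (hR t) hle (hTp_lt_one t)
  have hle (t : ℕ) : Td t ≤ Tp t := by
    induction t with
    | zero => exact h0
    | succ t ih => exact (hstep t ih).le
  exact hstep t (hle t)

end TrustDynamics

theorem hysteresis_damaged_recovers_slower_general
    (lamP deltaR s Rstar T0 : ℝ)
    (hlP0 : 0 < lamP) (hlP1 : lamP < 1)
    (hd1 : deltaR < 1)
    (hs0 : 0 < s) (hs1 : s < 1)
    (hRs0 : 0 < Rstar)
    (hT01 : T0 < 1)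
    (Tp Td : ℕ → ℝ)
    (hTp0 : Tp 0 = T0) (hTd0 : Td 0 = T0)
    (hTpupd : ∀ t : ℕ, Tp (t + 1) = Tp t + lamP * s * (1 - Tp t))
    (hTdupd : ∀ t : ℕ,
      Td (t + 1) = Td t + lamP * s * (1 - Td t) * (1 - (1 - deltaR) ^ t * Rstar)) :
    ∀ t : ℕ, 1 ≤ t → Td t < Tp t := by
  have hR (t : ℕ) : 0 < (1 - deltaR) ^ t * Rstar := mul_pos (pow_pos (by linarith) t) hRs0
  have ha1 : lamP * s < 1 := mul_lt_one_of_nonneg_of_lt_one_left hlP0.le hlP1 hs1.le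
  intro t ht
  obtain ⟨n, rfl⟩ := Nat.exists_eq_add_of_le' ht
  exact damaged_trust_lt_pristine_trust_succ (mul_pos hlP0 hs0) ha1 hR (by rw [hTp0, hTd0])
    (hTp0 ▸ hT01) hTpupd hTdupd n

/-- Hysteresis — damaged relationships recover strictly slower:
under sustained cooperation with constant signal `s ∈ (0,1)`, the pristine
trajectory (reputation 0) strictly dominates, at every `t ≥ 1`, the damaged
trajectory whose reputation is `(1−δ_R)^t · R⋆` with `R⋆ ∈ (0,1]`, both starting
from the same initial trust `T⁰ ∈ [0,1)`. -/
theorem hysteresis_damaged_recovers_slower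
    (lamP deltaR s Rstar T0 : ℝ)
    (hlP0 : 0 < lamP) (hlP1 : lamP < 1)
    (hd0 : 0 < deltaR) (hd1 : deltaR < 1)
    (hs0 : 0 < s) (hs1 : s < 1)
    (hRs0 : 0 < Rstar) (hRs1 : Rstar ≤ 1)
    (hT00 : 0 ≤ T0) (hT01 : T0 < 1)
    (Tp Td : ℕ → ℝ)
    (hTp0 : Tp 0 = T0) (hTd0 : Td 0 = T0)
    (hTpupd : ∀ t : ℕ, Tp (t + 1) = Tp t + lamP * s * (1 - Tp t))
    (hTdupd : ∀ t : ℕ,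
      Td (t + 1) = Td t + lamP * s * (1 - Td t) * (1 - (1 - deltaR) ^ t * Rstar)) :
    ∀ t : ℕ, 1 ≤ t → Td t < Tp t :=
  hysteresis_damaged_recovers_slower_general lamP deltaR s Rstar T0 hlP0 hlP1 hd1 hs0 hs1 hRs0 hT01
    Tp Td hTp0 hTd0 hTpupd hTdupd
end
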